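/- Let $A$ be a $k \times p$ zigzag matrix (its support is a zigzag) with at least two nonzero rows. Let $i_1$ be the minimal index of a nonzero row of $A$, let $i_2$ be the minimal index $> i_1$ of a nonzero row, and let $r$ be the sum of row $i_1$. Then applying the row merge (adding row $i_1$ to row $i_2$ and zeroing row $i_1$) followed by the lexicographically-maximal row shift of magnitude $r$ from row $i_2$ to row $i_1$ recovers $A$: $\mathrm{shift}^{\mathrm{row}}_{i_2\to i_1, r} \circ \mathrm{merge}^{\mathrm{row}}(A) = A$. Moreover $\mathrm{merge}^{\mathrm{row}}(A)$ is a zigzag matrix. -/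
import Mathlib


/-- A matrix over `ℕ` is zigzag if its support is a zigzag: any two nonzero
positions are comparable in the componentwise order. -/
def IsZigzagMatrix {k p : ℕ} (A : Fin k → Fin p → ℕ) : Prop :=
  ∀ (i : Fin k) (j : Fin p) (i' : Fin k) (j' : Fin p),
    A i j ≠ 0 → A i' j' ≠ 0 → (i ≤ i' ∧ j ≤ j') ∨ (i' ≤ i ∧ j' ≤ j)

/-- The row merge of `A` with respect to rows `i₁, i₂`: add row `i₁` to row
`i₂` and replace row `i₁` by zeros. -/
def mergeRow {k p : ℕ} (A : Fin k → Fin p → ℕ) (i₁ i₂ : Fin k) :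
    Fin k → Fin p → ℕ :=
  fun i j => if i = i₁ then 0 else if i = i₂ then A i₁ j + A i₂ j else A i j

/-- Strict lexicographic order on sequences. -/
def SeqLexLt {p : ℕ} (a b : Fin p → ℕ) : Prop :=
  ∃ j : Fin p, (∀ j' < j, a j' = b j') ∧ a j < b j

/-- Weak lexicographic order on sequences. -/
def SeqLexLe {p : ℕ} (a b : Fin p → ℕ) : Prop :=
  a = b ∨ SeqLexLt a b

/-- `c` witnesses that `A' = A + ∑_j c_j (E_{i₀,j} - E_{i₁,j})` with
`0 ≤ c_j ≤ A_{i₁,j}` and `∑_j c_j = m` (stated subtraction-free). -/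
def IsRowShiftWitness {k p : ℕ} (A : Fin k → Fin p → ℕ) (i₁ i₀ : Fin k)
    (m : ℕ) (A' : Fin k → Fin p → ℕ) (c : Fin p → ℕ) : Prop :=
  (∀ j, c j ≤ A i₁ j) ∧ (∑ j, c j = m) ∧
  ∀ (i : Fin k) (j : Fin p),
    A' i j + (if i = i₁ then c j else 0) = A i j + (if i = i₀ then c j else 0)

/-- `A' = shift^row_{i₁→i₀,m}(A)`: the row shift whose coefficient sequence
`c` is lexicographically maximal among the valid choices. -/
def IsRowShiftSplit {k p : ℕ} (A : Fin k → Fin p → ℕ) (i₁ i₀ : Fin k)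
    (m : ℕ) (A' : Fin k → Fin p → ℕ) : Prop :=
  ∃ c, IsRowShiftWitness A i₁ i₀ m A' c ∧
    ∀ c' : Fin p → ℕ, ((∀ j, c' j ≤ A i₁ j) ∧ ∑ j, c' j = m) → SeqLexLe c' c

/-- For a zigzag matrix `A` with at least two nonzero rows, with `i₁` the
minimal nonzero row, `i₂` the next nonzero row, and `r` the sum of row `i₁`:
the merge `merge^row(A)` is again zigzag, and the lexicographically-maximal
shift of magnitude `r` from row `i₂` to row `i₁` applied to `merge^row(A)`
recovers `A`. -/
theorem shift_merge_recovers_zigzag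
    {k p : ℕ} (A : Fin k → Fin p → ℕ) (hA : IsZigzagMatrix A)
    (i₁ i₂ : Fin k)
    (h₁ : (∃ j, A i₁ j ≠ 0) ∧ ∀ i : Fin k, (∃ j, A i j ≠ 0) → i₁ ≤ i)
    (h₂ : (∃ j, A i₂ j ≠ 0) ∧ i₁ < i₂ ∧
      ∀ i : Fin k, (∃ j, A i j ≠ 0) → i₁ < i → i₂ ≤ i) :
    IsZigzagMatrix (mergeRow A i₁ i₂) ∧
    IsRowShiftSplit (mergeRow A i₁ i₂) i₂ i₁ (∑ j, A i₁ j) A := by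

  obtain ⟨⟨j₁, hj₁⟩, hmin⟩ := h₁
  obtain ⟨⟨j₂, hj₂⟩, h12, hnext⟩ := h₂
  have hne : i₁ ≠ i₂ := ne_of_lt h12
  have zz_col : ∀ (s s' : Fin k) (j j' : Fin p),
      A s j ≠ 0 → A s' j' ≠ 0 → s < s' → j ≤ j' := by
    intro s s' j j' h h' hlt
    rcases hA s j s' j' h h' with ⟨_, hj⟩ | ⟨hs, _⟩
    · exact hj
    · exact absurd hlt (not_lt.mpr hs)
  have key : ∀ (i : Fin k) (j : Fin p), mergeRow A i₁ i₂ i j ≠ 0 →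
      i₂ ≤ i ∧ ∃ s, s ≤ i ∧ A s j ≠ 0 ∧ (i ≠ i₂ → s = i) := by
    intro i j h
    unfold mergeRow at h
    split_ifs at h with h1 h2
    · exact absurd rfl h
    · refine ⟨le_of_eq h2.symm, ?_⟩
      rcases Nat.eq_zero_or_pos (A i₁ j) with hz | hp
      · refine ⟨i, le_refl _, ?_, fun _ => rfl⟩
        rw [h2]; omega
      · exact ⟨i₁, h2 ▸ le_of_lt h12, by omega, fun hc => absurd h2 hc⟩
    · have hi1 : i₁ < i := lt_of_le_of_ne (hmin i ⟨j, h⟩) (Ne.symm h1)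
      exact ⟨hnext i ⟨j, h⟩ hi1, i, le_refl _, h, fun _ => rfl⟩
  constructor
  · intro i j i' j' h h'
    obtain ⟨hi2, s, hs, hAs, hsi⟩ := key i j h
    obtain ⟨hi2', s', hs', hAs', hsi'⟩ := key i' j' h'
    rcases lt_trichotomy i i' with hlt | heq | hlt
    · left
      refine ⟨le_of_lt hlt, ?_⟩
      have hs'i : s' = i' := hsi' (fun hc => absurd hlt (not_lt.mpr (hc ▸ hi2)))
      exact zz_col s s' j j' hAs hAs'
        (lt_of_le_of_lt hs (hs'i ▸ hlt))
    · subst heq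
      rcases le_total j j' with hj | hj
      · exact Or.inl ⟨le_refl _, hj⟩
      · exact Or.inr ⟨le_refl _, hj⟩
    · right
      refine ⟨le_of_lt hlt, ?_⟩
      have hsi'' : s = i := hsi (fun hc => absurd hlt (not_lt.mpr (hc ▸ hi2')))
      exact zz_col s' s j' j hAs' hAs
        (lt_of_le_of_lt hs' (hsi'' ▸ hlt))
  · refine ⟨A i₁, ⟨?_, rfl, ?_⟩, ?_⟩
    · intro j
      simp [mergeRow, Ne.symm hne]
    · intro i j
      by_cases h1 : i = i₁
      · subst h1; simp [mergeRow, hne]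
      by_cases h2 : i = i₂
      · rw [h2]
        simp [mergeRow, Ne.symm hne]
        omega
      · simp [mergeRow, h1, h2]
    · rintro c' ⟨hle, hsum⟩
      have hle' : ∀ j, c' j ≤ A i₁ j + A i₂ j := by
        intro j
        have := hle j
        simpa [mergeRow, Ne.symm hne] using this
      by_cases heq : c' = A i₁
      · exact Or.inl heq
      right
      set S := Finset.univ.filter fun j => c' j ≠ A i₁ j with hSdef
      have hS : S.Nonempty := by
        obtain ⟨j, hj⟩ := Function.ne_iff.mp heq
        exact ⟨j, Finset.mem_filter.mpr ⟨Finset.mem_univ _, hj⟩⟩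
      set j₀ := S.min' hS with hj₀def
      have hmem : j₀ ∈ S := S.min'_mem hS
      have hj₀ : c' j₀ ≠ A i₁ j₀ := (Finset.mem_filter.mp hmem).2
      have hbefore : ∀ j' < j₀, c' j' = A i₁ j' := by
        intro j' hj'
        by_contra hc
        exact absurd (S.min'_le j' (Finset.mem_filter.mpr ⟨Finset.mem_univ _, hc⟩))
          (not_le.mpr hj')
      rcases lt_or_gt_of_ne hj₀ with hlt | hgt
      · exact ⟨j₀, hbefore, hlt⟩
      · exfalso
        have hA2 : A i₂ j₀ ≠ 0 := by have := hle' j₀; omega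
        have hzero : ∀ j, j₀ < j → A i₁ j = 0 := by
          intro j hj
          by_contra hc
          exact absurd (zz_col i₁ i₂ j j₀ hc hA2 h12) (not_le.mpr hj)
        have hlt' : ∑ j, A i₁ j < ∑ j, c' j := by
          apply Finset.sum_lt_sum
          · intro j _
            rcases lt_trichotomy j j₀ with h | h | h
            · exact (hbefore j h).ge
            · subst h; exact le_of_lt hgt
            · rw [hzero j h]; exact Nat.zero_le _
          · exact ⟨j₀, Finset.mem_univ _, hgt⟩
        omega
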